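/- arXiv:2511.06162 — 2 statements merged into one kernel-verified Lean document; each statement's English description precedes it below -/
import Mathlib

section
/- Let (T, L, c, r) be a rooted WDTAP instance with visible width at most k, and let F ⊆ L be a shadow-minimal feasible solution (no link of F can be replaced by a proper shadow while maintaining feasibility). Then F is 2k-thin: for every vertex v, the number of links ℓ ∈ F such that v is an inner vertex of the tree path P_ℓ is at most 2k. -/
open scoped Classical

/-- A tree on vertex set `V`, rooted at `root`, encoded via the parent function.
Every non-root vertex `z` corresponds to the unique tree edge/arc `a_z` between
`z` and `parent z`. -/
structure ArcTree (V : Type*) where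
  root : V
  parent : V → V
  parent_root : parent root = root
  reaches_root : ∀ v : V, ∃ n : ℕ, parent^[n] v = root

namespace ArcTree

variable {V : Type*}

/-- `x` is an ancestor of `y` (possibly `x = y`). -/
def anc (T : ArcTree V) (x y : V) : Prop := ∃ n : ℕ, T.parent^[n] y = x

/-- The arc `a_z` (between `z` and `parent z`, for `z ≠ root`) lies on the
tree path between `u` and `v`. -/
def arcOnPath (T : ArcTree V) (u v z : V) : Prop :=
  z ≠ T.root ∧ ¬ (T.anc z u ↔ T.anc z v)

/-- The vertex `x` lies on the tree path between `u` and `v`. -/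
def onPath (T : ArcTree V) (u v x : V) : Prop :=
  (T.anc x u ∨ T.anc x v) ∧ ∀ z, T.anc z u → T.anc z v → T.anc z x

/-- `x` is an inner vertex of the tree path between `u` and `v`. -/
def innerOnPath (T : ArcTree V) (u v x : V) : Prop :=
  T.onPath u v x ∧ x ≠ u ∧ x ≠ v

/-- `w` is the least common ancestor of `u` and `v`. -/
def isLca (T : ArcTree V) (u v w : V) : Prop :=
  T.anc w u ∧ T.anc w v ∧ ∀ z, T.anc z u → T.anc z v → T.anc z w

end ArcTree

section Cover

variable {V : Type*}

/- Orientation convention: `up z = true` means the arc `a_z` is directed from `z` to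
`parent z` (an up-arc, pointing towards the root); `up z = false` means it is directed
from `parent z` to `z` (a down-arc). -/

/-- The directed link `ℓ = (u, v)` covers the arc `a_z`, i.e. `a_z` is a backward arc
of the tree path from `u` to `v` (equivalently, the walk from `v` back to `u`
traverses `a_z` in its forward direction). -/
def covers (T : ArcTree V) (up : V → Bool) (ℓ : V × V) (z : V) : Prop :=
  z ≠ T.root ∧
    ((T.anc z ℓ.2 ∧ ¬ T.anc z ℓ.1 ∧ up z = true) ∨
     (T.anc z ℓ.1 ∧ ¬ T.anc z ℓ.2 ∧ up z = false))

/-- The link `ℓ = (u,v)` covers the arc `a_z` in the wrong direction, i.e. `a_z` is a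
forward arc of the tree path from `u` to `v`. -/
def wcovers (T : ArcTree V) (up : V → Bool) (ℓ : V × V) (z : V) : Prop :=
  z ≠ T.root ∧
    ((T.anc z ℓ.1 ∧ ¬ T.anc z ℓ.2 ∧ up z = true) ∨
     (T.anc z ℓ.2 ∧ ¬ T.anc z ℓ.1 ∧ up z = false))

/-- `ℓ'` is a shadow of `ℓ`: the endpoints of `ℓ'` lie, in this order, on the tree path
of `ℓ`. -/
def IsShadow (T : ArcTree V) (ℓ ℓ' : V × V) : Prop :=
  T.onPath ℓ.1 ℓ.2 ℓ'.1 ∧ T.onPath ℓ'.1 ℓ.2 ℓ'.2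

/-- `x` is an inner vertex of the path of the generic shadow of `ℓ` (the minimal shadow
with the same directed coverage): `x` lies on `P_ℓ` and `ℓ` covers arcs on both sides
of `x`. -/
def innerGeneric (T : ArcTree V) (up : V → Bool) (ℓ : V × V) (x : V) : Prop :=
  T.onPath ℓ.1 ℓ.2 x ∧
    (∃ z, covers T up ℓ z ∧ T.arcOnPath ℓ.1 x z) ∧
    (∃ z, covers T up ℓ z ∧ T.arcOnPath x ℓ.2 z)

/-- The arc `a_z` (lying in the subtree of `v`) is visible to `v` with respect to the
link set `L'`. -/
def visibleArc (T : ArcTree V) (up : V → Bool) (L' : Set (V × V)) (v z : V) : Prop :=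
  T.anc v z ∧ z ≠ v ∧ ∃ ℓ ∈ L', covers T up ℓ z ∧ innerGeneric T up ℓ v

/-- A set of arcs (encoded by their lower endpoints) is ancestor-free: no arc of the
set lies on the path from another arc's apex (top endpoint) to the root. -/
def AncestorFree (T : ArcTree V) (S : Set V) : Prop :=
  ∀ z ∈ S, ∀ z' ∈ S, z ≠ z' → ¬ T.anc z' (T.parent z)

/-- The visible up-width of `v` w.r.t. the link set `L'` is at most `k`. -/
def upWidthLE (T : ArcTree V) (up : V → Bool) (L' : Set (V × V)) (v : V) (k : ℕ) : Prop :=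
  ∀ S : Finset V, AncestorFree T (S : Set V) →
    (∀ z ∈ S, up z = true ∧ visibleArc T up L' v z) → S.card ≤ k

/-- The visible down-width of `v` w.r.t. the link set `L'` is at most `k`. -/
def downWidthLE (T : ArcTree V) (up : V → Bool) (L' : Set (V × V)) (v : V) (k : ℕ) : Prop :=
  ∀ S : Finset V, AncestorFree T (S : Set V) →
    (∀ z ∈ S, up z = false ∧ visibleArc T up L' v z) → S.card ≤ k

/-- The link `ℓ` points into the subtree `T_v`. -/
def pointsInto (T : ArcTree V) (v : V) (ℓ : V × V) : Prop :=
  T.anc v ℓ.2 ∧ ℓ.2 ≠ v ∧ ¬ T.anc v ℓ.1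

/-- The link `ℓ` points out of the subtree `T_v`. -/
def pointsOut (T : ArcTree V) (v : V) (ℓ : V × V) : Prop :=
  T.anc v ℓ.1 ∧ ℓ.1 ≠ v ∧ ¬ T.anc v ℓ.2

/-- `v` is up-independent w.r.t. the link set `L'`: every link either covers no up-arc
of the subtree `T_v`, or its whole coverage lies inside `T_v`. -/
def upIndep (T : ArcTree V) (up : V → Bool) (L' : Set (V × V)) (v : V) : Prop :=
  ∀ ℓ ∈ L', (¬ ∃ z, covers T up ℓ z ∧ T.anc v z ∧ z ≠ v ∧ up z = true) ∨
    (∀ z, covers T up ℓ z → T.anc v z ∧ z ≠ v)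

/-- `v` is down-independent w.r.t. the link set `L'`. -/
def downIndep (T : ArcTree V) (up : V → Bool) (L' : Set (V × V)) (v : V) : Prop :=
  ∀ ℓ ∈ L', (¬ ∃ z, covers T up ℓ z ∧ T.anc v z ∧ z ≠ v ∧ up z = false) ∨
    (∀ z, covers T up ℓ z → T.anc v z ∧ z ≠ v)

/-- A feasible (integral) solution: every arc is covered by some link of `F`. -/
def Feasible (T : ArcTree V) (up : V → Bool) (F : Finset (V × V)) : Prop :=
  ∀ z, z ≠ T.root → ∃ ℓ ∈ F, covers T up ℓ z

/-- `F` is shadow-minimal: no link of `F` can be replaced by a proper shadow while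
maintaining feasibility. -/
def ShadowMinimal (T : ArcTree V) (up : V → Bool) (F : Finset (V × V)) : Prop :=
  ∀ ℓ ∈ F, ∀ ℓ' : V × V, IsShadow T ℓ ℓ' → ℓ' ≠ ℓ →
    ¬ Feasible T up (insert ℓ' (F.erase ℓ))

/-- A splitting of the link set: each link is mapped to a set of shadows whose tree
paths partition the arc set of its tree path. -/
def IsSplitting (T : ArcTree V) (σ : V × V → Finset (V × V)) : Prop :=
  ∀ ℓ : V × V,
    (σ ℓ).Nonempty ∧
    (∀ ℓ' ∈ σ ℓ, IsShadow T ℓ ℓ' ∧ (ℓ'.1 ≠ ℓ'.2 ∨ ℓ' = ℓ)) ∧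
    (∀ z, T.arcOnPath ℓ.1 ℓ.2 z ↔ ∃ ℓ' ∈ σ ℓ, T.arcOnPath ℓ'.1 ℓ'.2 z) ∧
    (∀ ℓ₁ ∈ σ ℓ, ∀ ℓ₂ ∈ σ ℓ, ℓ₁ ≠ ℓ₂ →
      ∀ z, T.arcOnPath ℓ₁.1 ℓ₁.2 z → ¬ T.arcOnPath ℓ₂.1 ℓ₂.2 z)

/-- The LP solution obtained from `x` by applying the splitting `σ`. -/
noncomputable def splitSol [Fintype V] (σ : V × V → Finset (V × V)) (x : V × V → ℝ) :
    V × V → ℝ :=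
  fun ℓ' => ∑ ℓ : V × V, if ℓ' ∈ σ ℓ then x ℓ else 0

/-- `x` is a feasible solution of the WDTAP set-covering LP. -/
def FeasLP [Fintype V] (T : ArcTree V) (up : V → Bool) (x : V × V → ℝ) : Prop :=
  (∀ ℓ, 0 ≤ x ℓ) ∧
    ∀ z, z ≠ T.root → 1 ≤ ∑ ℓ : V × V, if covers T up ℓ z then x ℓ else 0

end Cover

/-!
Fix `v` and a link `ℓ ∈ F` having `v` as an inner vertex of its path. Neither of the two
shadows `(ℓ.1, v)` and `(v, ℓ.2)` can replace `ℓ`, so each of them misses an arc that no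
other link of `F` covers. These two private arcs lie on the two sides of `v` on `P_ℓ`, which
makes `v` inner on the generic shadow of `ℓ`; the one of them lying in `T_v` is a down-arc
if `ℓ` starts in `T_v` and an up-arc otherwise, and it is visible to `v`. Private arcs of
distinct links are distinct, and they form an ancestor-free set, because a link through `v`
covering an arc `a_z` also covers every equally directed arc of `T_v` on the path from the
apex of `a_z` to the root. So at most `k` of the links start in `T_v`, and at most `k` do not.
-/

namespace ArcTree

variable {V : Type*} (T : ArcTree V)

lemma anc_refl (x : V) : T.anc x x := ⟨0, rfl⟩

variable {T}

lemma anc_trans {a b c : V} (hab : T.anc a b) (hbc : T.anc b c) : T.anc a c := by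
  obtain ⟨n, rfl⟩ := hab
  obtain ⟨m, rfl⟩ := hbc
  exact ⟨n + m, Function.iterate_add_apply _ _ _ _⟩

lemma anc_parent {x y : V} (h : T.anc x y) : T.anc (T.parent x) y := by
  obtain ⟨n, rfl⟩ := h
  exact ⟨n + 1, Function.iterate_succ_apply' _ _ _⟩

lemma anc_total {a b x : V} (ha : T.anc a x) (hb : T.anc b x) : T.anc a b ∨ T.anc b a := by
  obtain ⟨n, rfl⟩ := ha
  obtain ⟨m, rfl⟩ := hb
  rcases le_total n m with h | h
  · exact Or.inr ⟨m - n, by rw [← Function.iterate_add_apply, Nat.sub_add_cancel h]⟩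
  · exact Or.inl ⟨n - m, by rw [← Function.iterate_add_apply, Nat.sub_add_cancel h]⟩

lemma iterate_root (n : ℕ) : T.parent^[n] T.root = T.root :=
  Function.iterate_fixed T.parent_root n

lemma eq_root_of_anc_root {v : V} (h : T.anc v T.root) : v = T.root := by
  obtain ⟨n, rfl⟩ := h
  exact T.iterate_root n

lemma eq_root_of_isPeriodicPt {b : V} {p : ℕ} (hp : 0 < p)
    (h : Function.IsPeriodicPt T.parent p b) : b = T.root := by
  obtain ⟨N, hN⟩ := T.reaches_root b
  calc b = T.parent^[p * N] b := (h.mul_const N).symm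
    _ = T.parent^[p * N - N] (T.parent^[N] b) := by
      rw [← Function.iterate_add_apply, Nat.sub_add_cancel (Nat.le_mul_of_pos_left N hp)]
    _ = T.root := by rw [hN, T.iterate_root]

lemma anc_antisymm {a b : V} (hab : T.anc a b) (hba : T.anc b a) : a = b := by
  obtain ⟨n, rfl⟩ := hab
  obtain ⟨m, hm⟩ := hba
  rcases Nat.eq_zero_or_pos (m + n) with h | h
  · rw [(Nat.add_eq_zero_iff.mp h).2]
    rfl
  · have hb : b = T.root :=
      eq_root_of_isPeriodicPt h (by rw [Function.IsPeriodicPt, Function.IsFixedPt,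
        Function.iterate_add_apply, hm])
    rw [hb, T.iterate_root]

lemma arcOnPath_comm {u v z : V} : T.arcOnPath u v z ↔ T.arcOnPath v u z := by
  rw [arcOnPath, arcOnPath, Iff.comm (a := T.anc z u)]

lemma anc_of_arcOnPath_of_anc {u v z : V} (hvu : T.anc v u) (hz : T.arcOnPath u v z) :
    T.anc z u ∧ T.anc v z ∧ z ≠ v := by
  have hzu : T.anc z u := by
    by_contra hzu
    exact hz.2 ⟨fun h => absurd h hzu, fun h => anc_trans h hvu⟩
  have hzv : ¬ T.anc z v := fun h => hz.2 ⟨fun _ => h, fun _ => hzu⟩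
  refine ⟨hzu, (anc_total hzu hvu).resolve_left hzv, ?_⟩
  rintro rfl
  exact hzv (T.anc_refl z)

end ArcTree

open ArcTree

section PrivateArcs

variable {V : Type*} {T : ArcTree V} {up : V → Bool}

lemma up_eq_false_of_covers_of_anc {ℓ : V × V} {z : V} (hc : covers T up ℓ z)
    (hz : T.anc z ℓ.1) : up z = false := by
  rcases hc.2 with ⟨-, h, -⟩ | ⟨-, -, h⟩
  · exact absurd hz h
  · exact h

lemma up_eq_true_of_covers_of_anc {ℓ : V × V} {z : V} (hc : covers T up ℓ z)
    (hz : T.anc z ℓ.2) : up z = true := by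
  rcases hc.2 with ⟨-, -, h⟩ | ⟨-, h, -⟩
  · exact h
  · exact absurd hz h

lemma arcOnPath_of_covers_of_not_covers_right {ℓ : V × V} {v z : V}
    (hc : covers T up ℓ z) (hnc : ¬ covers T up (v, ℓ.2) z) : T.arcOnPath ℓ.1 v z := by
  refine ⟨hc.1, fun hiff => hnc ⟨hc.1, ?_⟩⟩
  rcases hc.2 with ⟨h2, h1, hu⟩ | ⟨h1, h2, hu⟩
  · exact Or.inl ⟨h2, fun h => h1 (hiff.mpr h), hu⟩
  · exact Or.inr ⟨hiff.mp h1, h2, hu⟩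

lemma arcOnPath_of_covers_of_not_covers_left {ℓ : V × V} {v z : V}
    (hc : covers T up ℓ z) (hnc : ¬ covers T up (ℓ.1, v) z) : T.arcOnPath v ℓ.2 z := by
  refine ⟨hc.1, fun hiff => hnc ⟨hc.1, ?_⟩⟩
  rcases hc.2 with ⟨h2, h1, hu⟩ | ⟨h1, h2, hu⟩
  · exact Or.inl ⟨hiff.mpr h2, h1, hu⟩
  · exact Or.inr ⟨h1, fun h => h2 (hiff.mp h), hu⟩

lemma covers_of_anc_parent {ℓ : V × V} {v z z' : V} (hv : T.onPath ℓ.1 ℓ.2 v)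
    (hc : covers T up ℓ z) (hvz' : T.anc v z') (hz'v : z' ≠ v)
    (hz' : T.anc z' (T.parent z)) (hup : up z' = up z) : covers T up ℓ z' := by
  have hz'r : z' ≠ T.root := by
    rintro rfl
    exact hz'v (eq_root_of_anc_root hvz').symm
  have below : ∀ {x}, T.anc z x → T.anc z' x := fun h => anc_trans hz' (anc_parent h)
  have not_both : T.anc z' ℓ.1 → T.anc z' ℓ.2 → False := fun h1 h2 =>
    hz'v (anc_antisymm (hv.2 z' h1 h2) hvz')
  refine ⟨hz'r, ?_⟩
  rcases hc.2 with ⟨h2, -, hu⟩ | ⟨h1, -, hu⟩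
  · exact Or.inl ⟨below h2, fun h1 => not_both h1 (below h2), hup.trans hu⟩
  · exact Or.inr ⟨below h1, not_both (below h1), hup.trans hu⟩

def IsPrivateArc (T : ArcTree V) (up : V → Bool) (F : Finset (V × V)) (ℓ : V × V) (z : V) :
    Prop :=
  covers T up ℓ z ∧ ∀ m ∈ F, covers T up m z → m = ℓ

variable {F : Finset (V × V)} {ℓ : V × V} {v : V}

lemma exists_isPrivateArc_not_covers (hfeas : Feasible T up F) (hmin : ShadowMinimal T up F)
    (hℓ : ℓ ∈ F) {ℓ' : V × V} (hsh : IsShadow T ℓ ℓ') (hne : ℓ' ≠ ℓ) :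
    ∃ z, IsPrivateArc T up F ℓ z ∧ ¬ covers T up ℓ' z := by
  obtain ⟨z, hzr, hz⟩ :
      ∃ z, z ≠ T.root ∧ ∀ m ∈ insert ℓ' (F.erase ℓ), ¬ covers T up m z := by
    simpa [Feasible] using hmin ℓ hℓ ℓ' hsh hne
  have hpriv : ∀ m ∈ F, covers T up m z → m = ℓ := fun m hm hcm => by
    by_contra hmℓ
    exact hz m (Finset.mem_insert_of_mem (Finset.mem_erase.mpr ⟨hmℓ, hm⟩)) hcm
  obtain ⟨m, hm, hcm⟩ := hfeas z hzr
  obtain rfl := hpriv m hm hcm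
  exact ⟨z, ⟨hcm, hpriv⟩, hz ℓ' (Finset.mem_insert_self _ _)⟩

lemma isShadow_fst_of_onPath (h : T.onPath ℓ.1 ℓ.2 v) : IsShadow T ℓ (ℓ.1, v) :=
  ⟨⟨Or.inl (T.anc_refl ℓ.1), fun _ hz _ => hz⟩, h⟩

lemma isShadow_snd_of_onPath (h : T.onPath ℓ.1 ℓ.2 v) : IsShadow T ℓ (v, ℓ.2) :=
  ⟨h, ⟨Or.inr (T.anc_refl ℓ.2), fun _ _ hz => hz⟩⟩

variable (hfeas : Feasible T up F) (hmin : ShadowMinimal T up F) (hℓ : ℓ ∈ F)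
  (hin : T.innerOnPath ℓ.1 ℓ.2 v)
include hfeas hmin hℓ hin

lemma exists_isPrivateArc_arcOnPath_fst :
    ∃ z, IsPrivateArc T up F ℓ z ∧ T.arcOnPath ℓ.1 v z := by
  obtain ⟨z, hpriv, hnc⟩ := exists_isPrivateArc_not_covers hfeas hmin hℓ
    (isShadow_snd_of_onPath hin.1) fun h => hin.2.1 (congrArg Prod.fst h)
  exact ⟨z, hpriv, arcOnPath_of_covers_of_not_covers_right hpriv.1 hnc⟩

lemma exists_isPrivateArc_arcOnPath_snd :
    ∃ z, IsPrivateArc T up F ℓ z ∧ T.arcOnPath v ℓ.2 z := by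
  obtain ⟨z, hpriv, hnc⟩ := exists_isPrivateArc_not_covers hfeas hmin hℓ
    (isShadow_fst_of_onPath hin.1) fun h => hin.2.2 (congrArg Prod.snd h)
  exact ⟨z, hpriv, arcOnPath_of_covers_of_not_covers_left hpriv.1 hnc⟩

lemma innerGeneric_of_shadowMinimal : innerGeneric T up ℓ v := by
  obtain ⟨z₁, hpriv₁, hz₁⟩ := exists_isPrivateArc_arcOnPath_fst hfeas hmin hℓ hin
  obtain ⟨z₂, hpriv₂, hz₂⟩ := exists_isPrivateArc_arcOnPath_snd hfeas hmin hℓ hin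
  exact ⟨hin.1, ⟨z₁, hpriv₁.1, hz₁⟩, ⟨z₂, hpriv₂.1, hz₂⟩⟩

lemma exists_down_isPrivateArc_below (hv : T.anc v ℓ.1) :
    ∃ z, up z = false ∧ T.anc v z ∧ z ≠ v ∧ IsPrivateArc T up F ℓ z := by
  obtain ⟨z, hpriv, hz⟩ := exists_isPrivateArc_arcOnPath_fst hfeas hmin hℓ hin
  obtain ⟨hzℓ, hvz, hzv⟩ := anc_of_arcOnPath_of_anc hv hz
  exact ⟨z, up_eq_false_of_covers_of_anc hpriv.1 hzℓ, hvz, hzv, hpriv⟩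

lemma exists_up_isPrivateArc_below (hv : ¬ T.anc v ℓ.1) :
    ∃ z, up z = true ∧ T.anc v z ∧ z ≠ v ∧ IsPrivateArc T up F ℓ z := by
  obtain ⟨z, hpriv, hz⟩ := exists_isPrivateArc_arcOnPath_snd hfeas hmin hℓ hin
  obtain ⟨hzℓ, hvz, hzv⟩ :=
    anc_of_arcOnPath_of_anc (hin.1.1.resolve_left hv) (arcOnPath_comm.mp hz)
  exact ⟨z, up_eq_true_of_covers_of_anc hpriv.1 hzℓ, hvz, hzv, hpriv⟩

end PrivateArcs

lemma card_le_of_isPrivateArc_below {V : Type*} {T : ArcTree V} {up : V → Bool}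
    {L : Set (V × V)} {F D : Finset (V × V)} {v : V} {k : ℕ} (b : Bool)
    (hwidth : ∀ S : Finset V, AncestorFree T (S : Set V) →
      (∀ z ∈ S, up z = b ∧ visibleArc T up L v z) → S.card ≤ k)
    (hFL : (F : Set (V × V)) ⊆ L) (hDF : D ⊆ F)
    (hgen : ∀ ℓ ∈ D, innerGeneric T up ℓ v)
    (hD : ∀ ℓ ∈ D, ∃ z, up z = b ∧ T.anc v z ∧ z ≠ v ∧ IsPrivateArc T up F ℓ z) :
    D.card ≤ k := by
  have : Nonempty V := ⟨T.root⟩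
  choose! g hup hvg hgv hpriv using hD
  have hinj : Set.InjOn g D := fun ℓ hℓ ℓ' hℓ' heq =>
    (hpriv ℓ' hℓ').2 ℓ (hDF hℓ) (heq ▸ (hpriv ℓ hℓ).1)
  rw [← Finset.card_image_of_injOn hinj]
  refine hwidth _ ?_ ?_
  · simp only [Finset.coe_image, AncestorFree, Set.forall_mem_image]
    intro ℓ hℓ ℓ' hℓ' hne hanc
    have hcov : covers T up ℓ (g ℓ') :=
      covers_of_anc_parent (hgen ℓ hℓ).1 (hpriv ℓ hℓ).1 (hvg ℓ' hℓ') (hgv ℓ' hℓ') hanc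
        ((hup ℓ' hℓ').trans (hup ℓ hℓ).symm)
    exact hne (by rw [(hpriv ℓ' hℓ').2 ℓ (hDF hℓ) hcov])
  · simp only [Finset.mem_image, forall_exists_index, and_imp]
    rintro _ ℓ hℓ rfl
    exact ⟨hup ℓ hℓ, hvg ℓ hℓ, hgv ℓ hℓ, ℓ, hFL (hDF hℓ), (hpriv ℓ hℓ).1, hgen ℓ hℓ⟩

theorem shadow_minimal_solution_is_thin_general {V : Type*}
    (T : ArcTree V) (up : V → Bool) (L : Finset (V × V)) (k : ℕ)
    (hwidth : ∀ v : V, upWidthLE T up (L : Set (V × V)) v k ∧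
      downWidthLE T up (L : Set (V × V)) v k)
    (F : Finset (V × V)) (hFL : F ⊆ L)
    (hfeas : Feasible T up F) (hmin : ShadowMinimal T up F) :
    ∀ v : V, (F.filter (fun ℓ => T.innerOnPath ℓ.1 ℓ.2 v)).card ≤ 2 * k := by
  intro v
  set Fv := F.filter (fun ℓ => T.innerOnPath ℓ.1 ℓ.2 v)
  have hFvF : Fv ⊆ F := Finset.filter_subset _ _
  have hFL' : (F : Set (V × V)) ⊆ L := Finset.coe_subset.mpr hFL
  have hinner : ∀ ℓ ∈ Fv, T.innerOnPath ℓ.1 ℓ.2 v := fun ℓ hℓ => (Finset.mem_filter.mp hℓ).2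
  have hgen : ∀ ℓ ∈ Fv, innerGeneric T up ℓ v := fun ℓ hℓ =>
    innerGeneric_of_shadowMinimal hfeas hmin (hFvF hℓ) (hinner ℓ hℓ)
  have hdown : (Fv.filter (fun ℓ => T.anc v ℓ.1)).card ≤ k :=
    card_le_of_isPrivateArc_below false (hwidth v).2 hFL' ((Finset.filter_subset _ _).trans hFvF)
      (fun ℓ hℓ => hgen ℓ (Finset.mem_of_mem_filter ℓ hℓ)) fun ℓ hℓ =>
      have ⟨hℓ, hv⟩ := Finset.mem_filter.mp hℓ
      exists_down_isPrivateArc_below hfeas hmin (hFvF hℓ) (hinner ℓ hℓ) hv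
  have hup : (Fv.filter (fun ℓ => ¬ T.anc v ℓ.1)).card ≤ k :=
    card_le_of_isPrivateArc_below true (hwidth v).1 hFL' ((Finset.filter_subset _ _).trans hFvF)
      (fun ℓ hℓ => hgen ℓ (Finset.mem_of_mem_filter ℓ hℓ)) fun ℓ hℓ =>
      have ⟨hℓ, hv⟩ := Finset.mem_filter.mp hℓ
      exists_up_isPrivateArc_below hfeas hmin (hFvF hℓ) (hinner ℓ hℓ) hv
  calc Fv.card = _ + _ := (Finset.card_filter_add_card_filter_not _).symm
    _ ≤ k + k := Nat.add_le_add hdown hup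
    _ = 2 * k := (Nat.two_mul k).symm

/-- If the instance `(T, L)` has visible width at most `k` and
`F ⊆ L` is a shadow-minimal feasible solution, then `F` is `2k`-thin: every vertex is an
inner vertex of the tree path of at most `2k` links of `F`. -/
theorem shadow_minimal_solution_is_thin {V : Type*} [Fintype V]
    (T : ArcTree V) (up : V → Bool) (L : Finset (V × V)) (k : ℕ)
    (hwidth : ∀ v : V, upWidthLE T up (L : Set (V × V)) v k ∧
      downWidthLE T up (L : Set (V × V)) v k)
    (F : Finset (V × V)) (hFL : F ⊆ L)
    (hfeas : Feasible T up F) (hmin : ShadowMinimal T up F) :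
    ∀ v : V, (F.filter (fun ℓ => T.innerOnPath ℓ.1 ℓ.2 v)).card ≤ 2 * k :=
  shadow_minimal_solution_is_thin_general T up L k hwidth F hFL hfeas hmin
end

section
/- Let x be an LP solution for a rooted WDTAP instance, σ a splitting, x' = split(x, σ), and v a non-root vertex. Then x'(L↓_v) ≤ x(L↓_v) and x'(L↑_v) ≤ x(L↑_v), where L↓_v (resp. L↑_v) denotes the set of links pointing into (resp. out of) the subtree T_v. -/
open scoped Classical

/-!
Every link pointing into (out of) `T_v` has the arc `a_v` on its path, and a shadow of `ℓ` can
point into (out of) `T_v` only if `ℓ` does. The shadows in `σ ℓ` have arc-disjoint paths, so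
at most one of them contains `a_v`. Hence each link `ℓ` passes its value `x ℓ` to at most one
shadow pointing into (out of) `T_v`, and only when `ℓ` itself points into (out of) `T_v`.
-/

namespace ArcTree

variable {V : Type*} {T : ArcTree V}

theorem anc.trans {x y z : V} (hxy : T.anc x y) (hyz : T.anc y z) : T.anc x z := by
  obtain ⟨n, rfl⟩ := hxy
  obtain ⟨m, rfl⟩ := hyz
  exact ⟨n + m, Function.iterate_add_apply _ _ _ _⟩

theorem iterate_parent_root (T : ArcTree V) (n : ℕ) : T.parent^[n] T.root = T.root :=
  Function.iterate_fixed T.parent_root n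

theorem eq_root_of_iterate_eq {y : V} {k : ℕ} (hk : 0 < k) (hy : T.parent^[k] y = y) :
    y = T.root := by
  obtain ⟨N, hN⟩ := T.reaches_root y
  have hNk : N ≤ k * N := Nat.le_mul_of_pos_left N hk
  calc y = T.parent^[k * N] y := (Function.IsPeriodicPt.mul_const hy N).eq.symm
    _ = T.parent^[k * N - N] (T.parent^[N] y) := by
      rw [← Function.iterate_add_apply, Nat.sub_add_cancel hNk]
    _ = T.root := by rw [hN, iterate_parent_root]

theorem anc_antisymm_s13 {x y : V} (hxy : T.anc x y) (hyx : T.anc y x) : x = y := by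
  obtain ⟨n, rfl⟩ := hxy
  obtain ⟨m, hm⟩ := hyx
  rcases Nat.eq_zero_or_pos n with rfl | hn
  · rfl
  have hcycle : T.parent^[m + n] y = y := by rw [Function.iterate_add_apply, hm]
  rw [eq_root_of_iterate_eq (by omega) hcycle, iterate_parent_root]

end ArcTree

section PointingLinks

open ArcTree

variable {V : Type*} {T : ArcTree V} {v : V} {ℓ ℓ' : V × V}

theorem pointsInto.arcOnPath (hv : v ≠ T.root) (h : pointsInto T v ℓ) :
    T.arcOnPath ℓ.1 ℓ.2 v :=
  ⟨hv, fun hiff => h.2.2 (hiff.mpr h.1)⟩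

theorem pointsOut.arcOnPath (hv : v ≠ T.root) (h : pointsOut T v ℓ) :
    T.arcOnPath ℓ.1 ℓ.2 v :=
  ⟨hv, fun hiff => h.2.2 (hiff.mp h.1)⟩

theorem IsShadow.pointsInto (hsh : IsShadow T ℓ ℓ') (h : pointsInto T v ℓ') :
    pointsInto T v ℓ := by
  obtain ⟨⟨-, hlca₁⟩, ⟨hend₂, -⟩⟩ := hsh
  obtain ⟨hv₂, hne, hv₁⟩ := h
  have hanc₂ : T.anc ℓ'.2 ℓ.2 := hend₂.resolve_left fun h => hv₁ (hv₂.trans h)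
  have hvℓ₂ : T.anc v ℓ.2 := hv₂.trans hanc₂
  refine ⟨hvℓ₂, ?_, fun hvℓ₁ => hv₁ (hlca₁ v hvℓ₁ hvℓ₂)⟩
  rintro rfl
  exact hne (anc_antisymm_s13 hanc₂ hv₂)

theorem IsShadow.pointsOut (hsh : IsShadow T ℓ ℓ') (h : pointsOut T v ℓ') :
    pointsOut T v ℓ := by
  obtain ⟨⟨hend₁, -⟩, ⟨-, hlca₂⟩⟩ := hsh
  obtain ⟨hv₁, hne, hv₂⟩ := h
  have hvℓ₂ : ¬ T.anc v ℓ.2 := fun hvℓ₂ => hv₂ (hlca₂ v hv₁ hvℓ₂)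
  have hanc₁ : T.anc ℓ'.1 ℓ.1 := hend₁.resolve_right fun h => hvℓ₂ (hv₁.trans h)
  refine ⟨hv₁.trans hanc₁, ?_, hvℓ₂⟩
  rintro rfl
  exact hne (anc_antisymm_s13 hanc₁ hv₁)

end PointingLinks

section Splitting

variable {V : Type*}

variable {T : ArcTree V} {σ : V × V → Finset (V × V)}

theorem IsSplitting.isShadow (hσ : IsSplitting T σ) {ℓ ℓ' : V × V} (h : ℓ' ∈ σ ℓ) :
    IsShadow T ℓ ℓ' :=
  ((hσ ℓ).2.1 ℓ' h).1

theorem IsSplitting.eq_of_arcOnPath (hσ : IsSplitting T σ) {ℓ ℓ₁ ℓ₂ : V × V}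
    (h₁ : ℓ₁ ∈ σ ℓ) (h₂ : ℓ₂ ∈ σ ℓ) {z : V}
    (hz₁ : T.arcOnPath ℓ₁.1 ℓ₁.2 z) (hz₂ : T.arcOnPath ℓ₂.1 ℓ₂.2 z) : ℓ₁ = ℓ₂ := by
  by_contra hne
  exact (hσ ℓ).2.2.2 ℓ₁ h₁ ℓ₂ h₂ hne z hz₁ hz₂

theorem sum_ite_splitSol_le [Fintype V] {x : V × V → ℝ}
    (hx : ∀ ℓ, 0 ≤ x ℓ) (P : V × V → Prop)
    (hmono : ∀ ℓ, ∀ ℓ' ∈ σ ℓ, P ℓ' → P ℓ)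
    (hunique : ∀ ℓ, ∀ ℓ₁ ∈ σ ℓ, ∀ ℓ₂ ∈ σ ℓ, P ℓ₁ → P ℓ₂ → ℓ₁ = ℓ₂) :
    (∑ ℓ : V × V, if P ℓ then splitSol σ x ℓ else 0) ≤
      ∑ ℓ : V × V, if P ℓ then x ℓ else 0 := by
  have hcard (ℓ : V × V) : ((σ ℓ).filter P).card ≤ if P ℓ then 1 else 0 := by
    split_ifs with hP
    · exact Finset.card_le_one.mpr fun ℓ₁ h₁ ℓ₂ h₂ =>
        hunique ℓ _ (Finset.mem_filter.1 h₁).1 _ (Finset.mem_filter.1 h₂).1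
          (Finset.mem_filter.1 h₁).2 (Finset.mem_filter.1 h₂).2
    · exact (Finset.card_eq_zero.mpr (Finset.filter_eq_empty_iff.mpr
        fun ℓ' h hP' => hP (hmono ℓ ℓ' h hP'))).le
  calc (∑ ℓ' : V × V, if P ℓ' then splitSol σ x ℓ' else 0)
      = ∑ ℓ' : V × V, ∑ ℓ : V × V, if ℓ' ∈ (σ ℓ).filter P then x ℓ else 0 := by
        refine Finset.sum_congr rfl fun ℓ' _ => ?_
        by_cases hP : P ℓ' <;> simp [splitSol, hP]
    _ = ∑ ℓ : V × V, ((σ ℓ).filter P).card • x ℓ := by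
        rw [Finset.sum_comm]
        simp only [Finset.sum_ite_mem, Finset.univ_inter, Finset.sum_const]
    _ ≤ ∑ ℓ : V × V, if P ℓ then x ℓ else 0 := by
        refine Finset.sum_le_sum fun ℓ _ => ?_
        calc ((σ ℓ).filter P).card • x ℓ ≤ (if P ℓ then 1 else 0 : ℕ) • x ℓ :=
              nsmul_le_nsmul_left (hx ℓ) (hcard ℓ)
          _ = if P ℓ then x ℓ else 0 := by split_ifs <;> simp

end Splitting

/-- Splitting cannot increase the total LP value on the links pointing
into, or out of, the subtree of a non-root vertex `v`. -/
theorem split_value_pointing_into_out {V : Type*} [Fintype V]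
    (T : ArcTree V) (v : V) (hv : v ≠ T.root)
    (x : V × V → ℝ) (hx : ∀ ℓ, 0 ≤ x ℓ)
    (σ : V × V → Finset (V × V)) (hσ : IsSplitting T σ) :
    (∑ ℓ : V × V, if pointsInto T v ℓ then splitSol σ x ℓ else 0) ≤
      (∑ ℓ : V × V, if pointsInto T v ℓ then x ℓ else 0) ∧
    (∑ ℓ : V × V, if pointsOut T v ℓ then splitSol σ x ℓ else 0) ≤
      (∑ ℓ : V × V, if pointsOut T v ℓ then x ℓ else 0) := by
  refine ⟨sum_ite_splitSol_le hx _ (fun _ _ h hP => (hσ.isShadow h).pointsInto hP) ?_,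
    sum_ite_splitSol_le hx _ (fun _ _ h hP => (hσ.isShadow h).pointsOut hP) ?_⟩
  · exact fun _ _ h₁ _ h₂ hP₁ hP₂ =>
      hσ.eq_of_arcOnPath h₁ h₂ (hP₁.arcOnPath hv) (hP₂.arcOnPath hv)
  · exact fun _ _ h₁ _ h₂ hP₁ hP₂ =>
      hσ.eq_of_arcOnPath h₁ h₂ (hP₁.arcOnPath hv) (hP₂.arcOnPath hv)
end
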